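/- arXiv:1605.09160 — 2 statements merged into one kernel-verified Lean document; each statement's English description precedes it below -/
import Mathlib

section
/- For every 1 ≤ p < ∞ and integers 1 ≤ q, n, the ratio (Γ(n/p)/Γ((n+q)/p))^{1/q} is bounded above by C · (n+q)^{−1/p} for an absolute constant C > 0 (independent of n, p, q). -/
/-!
Write `s = 1 / p ≤ 1`. Log-convexity of `Γ` at `x + 1 = s (x + s) + (1 - s) (x + s + 1)` gives
Wendel's bound `Γ(x + 1) (x + s) ^ s ≤ Γ(x + s + 1)`. Iterating it `q` times from `x = n / p`
bounds `Γ((n + q) / p + 1) / Γ(n / p + 1)` below by `∏_{1 ≤ j ≤ q} (x + j s) ^ s`. Since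
`x + j s ≥ j (x + q s) / q` and `q! ≥ (q / e) ^ q`, this product is at least
`((x + q s) / e) ^ (q s)`. What remains is `(n + q) / n ≤ e ^ q` and `(e p) ^ (1 / p) ≤ e`.
-/

open Real Finset
open scoped Nat

theorem Real.Gamma_add_one_mul_rpow_le {x s : ℝ} (hx : 0 < x) (hs0 : 0 ≤ s) (hs1 : s ≤ 1) :
    Gamma (x + 1) * (x + s) ^ s ≤ Gamma (x + s + 1) := by
  have hxs : 0 < x + s := by linarith
  have hlog := convexOn_log_Gamma.2 (Set.mem_Ioi.mpr hxs)
    (Set.mem_Ioi.mpr (by linarith : 0 < x + s + 1)) hs0 (sub_nonneg.mpr hs1) (add_sub_cancel s 1)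
  rw [show s • (x + s) + (1 - s) • (x + s + 1) = x + 1 by simp only [smul_eq_mul]; ring] at hlog
  simp only [Function.comp_apply, smul_eq_mul, Gamma_add_one hxs.ne',
    log_mul hxs.ne' (Gamma_pos_of_pos hxs).ne'] at hlog
  rw [← log_le_log_iff (by positivity) (Gamma_pos_of_pos (by positivity)), Gamma_add_one hxs.ne',
    log_mul (Gamma_pos_of_pos (by positivity)).ne' (by positivity), log_rpow hxs,
    log_mul hxs.ne' (Gamma_pos_of_pos hxs).ne']
  linarith

theorem Real.Gamma_add_one_mul_prod_rpow_le {x s : ℝ} (hx : 0 < x) (hs0 : 0 ≤ s) (hs1 : s ≤ 1)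
    (q : ℕ) : Gamma (x + 1) * ∏ j ∈ range q, (x + (j + 1) * s) ^ s ≤ Gamma (x + q * s + 1) := by
  induction q with
  | zero => simp
  | succ q ih =>
    have hstep := Gamma_add_one_mul_rpow_le (x := x + q * s) (by positivity) hs0 hs1
    rw [prod_range_succ, ← mul_assoc]
    push_cast
    rw [show x + (q + 1) * s = x + q * s + s by ring]
    exact (mul_le_mul_of_nonneg_right ih (by positivity)).trans hstep

theorem div_exp_one_pow_le_prod_add_mul {x s : ℝ} (hx : 0 ≤ x) (hs : 0 ≤ s) (q : ℕ) :
    ((x + q * s) / exp 1) ^ q ≤ ∏ j ∈ range q, (x + (j + 1) * s) := by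
  rcases q.eq_zero_or_pos with rfl | hq
  · simp
  have hq' : (0 : ℝ) < q := by exact_mod_cast hq
  set c := (x + q * s) / q
  have hterm : ∀ j ∈ range q, (j + 1) * c ≤ x + (j + 1) * s := by
    intro j hj
    have hjq : (j : ℝ) + 1 ≤ q := by exact_mod_cast mem_range.mp hj
    rw [mul_div_assoc', div_le_iff₀ hq']
    nlinarith
  have hfact : ((q : ℝ) / exp 1) ^ q ≤ q ! := by
    rw [div_pow, ← exp_nat_mul, mul_one, div_le_iff₀ (by positivity),
      ← div_le_iff₀' (by positivity)]
    exact pow_div_factorial_le_exp _ hq'.le q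
  calc ((x + q * s) / exp 1) ^ q = ((q : ℝ) / exp 1) ^ q * c ^ q := by
        rw [← mul_pow, div_mul_eq_mul_div, mul_div_cancel₀ _ hq'.ne']
    _ ≤ q ! * c ^ q := by gcongr
    _ = ∏ j ∈ range q, ((j + 1) * c) := by
        rw [prod_mul_distrib, prod_const, card_range, ← prod_range_add_one_eq_factorial]
        push_cast
        rfl
    _ ≤ ∏ j ∈ range q, (x + (j + 1) * s) := prod_le_prod (fun j _ => by positivity) hterm

theorem Real.Gamma_div_Gamma_add_le {x s : ℝ} (hx : 0 < x) (hs0 : 0 ≤ s) (hs1 : s ≤ 1) (q : ℕ) :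
    Gamma x / Gamma (x + q * s) ≤ (x + q * s) / x * ((exp 1 / (x + q * s)) ^ s) ^ q := by
  set y := x + q * s
  have hy : 0 < y := by positivity
  have hprod : Gamma (x + 1) * ((y / exp 1) ^ s) ^ q ≤ Gamma (y + 1) := by
    calc Gamma (x + 1) * ((y / exp 1) ^ s) ^ q
        = Gamma (x + 1) * ((y / exp 1) ^ q) ^ s := by
          rw [← rpow_mul_natCast (by positivity), ← rpow_natCast_mul (by positivity), mul_comm s]
      _ ≤ Gamma (x + 1) * (∏ j ∈ range q, (x + (j + 1) * s)) ^ s := by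
          gcongr
          exact div_exp_one_pow_le_prod_add_mul hx.le hs0 q
      _ = Gamma (x + 1) * ∏ j ∈ range q, (x + (j + 1) * s) ^ s := by
          rw [finsetProd_rpow _ _ (fun j _ => by positivity)]
      _ ≤ Gamma (y + 1) := Gamma_add_one_mul_prod_rpow_le hx hs0 hs1 q
  rw [Gamma_add_one hx.ne', Gamma_add_one hy.ne'] at hprod
  rw [← inv_div y, inv_rpow (by positivity), inv_pow, div_le_iff₀ (Gamma_pos_of_pos hy)]
  have hB : 0 < ((y / exp 1) ^ s) ^ q := by positivity
  field_simp
  linarith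

theorem Real.exp_one_div_div_rpow_one_div_le {p t : ℝ} (hp : 0 < p) (ht : 0 < t) :
    (exp 1 / (t / p)) ^ (1 / p) ≤ exp 1 * t ^ (-(1 / p)) := by
  have hroot : (exp 1 * p) ^ (1 / p) ≤ exp 1 := by
    rw [rpow_def_of_pos (by positivity), exp_le_exp, log_mul (exp_pos 1).ne' hp.ne', log_exp,
      ← div_eq_mul_one_div, div_le_one hp]
    linarith [log_le_sub_one_of_pos hp]
  rw [div_div_eq_mul_div, div_rpow (by positivity) ht.le, rpow_neg ht.le, ← div_eq_mul_inv]
  gcongr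

theorem stmt_9 : ∃ C : ℝ, 0 < C ∧ ∀ (p : ℝ), 1 ≤ p → ∀ q n : ℕ, 1 ≤ q → 1 ≤ n →
    (Real.Gamma (n / p) / Real.Gamma ((n + q) / p)) ^ ((1 : ℝ) / q)
      ≤ C * ((n : ℝ) + q) ^ (-(1 / p)) := by
  refine ⟨exp 1 ^ 2, by positivity, fun p hp q n hq hn => ?_⟩
  have hp0 : 0 < p := by linarith
  have hn1 : (1 : ℝ) ≤ n := by exact_mod_cast hn
  have hratio : ((n : ℝ) + q) / n ≤ exp 1 ^ q := by
    rw [← exp_nat_mul, mul_one, div_le_iff₀ (by positivity)]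
    nlinarith [add_one_le_exp q, (Nat.cast_nonneg q : (0 : ℝ) ≤ q)]
  have hGamma : Gamma (n / p) / Gamma ((n + q) / p)
      ≤ (exp 1 ^ 2 * ((n : ℝ) + q) ^ (-(1 / p))) ^ q := by
    have h := Gamma_div_Gamma_add_le (x := n / p) (s := 1 / p) (by positivity) (by positivity)
      ((div_le_one hp0).mpr hp) q
    rw [show (n : ℝ) / p + q * (1 / p) = (n + q) / p by ring,
      div_div_div_cancel_right₀ hp0.ne'] at h
    calc _ ≤ _ := h
      _ ≤ exp 1 ^ q * (exp 1 * ((n : ℝ) + q) ^ (-(1 / p))) ^ q := by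
          gcongr
          exact exp_one_div_div_rpow_one_div_le hp0 (by positivity)
      _ = _ := by ring
  calc _ ≤ ((exp 1 ^ 2 * ((n : ℝ) + q) ^ (-(1 / p))) ^ q) ^ ((1 : ℝ) / q) := by gcongr
    _ = _ := by rw [one_div (q : ℝ), pow_rpow_inv_natCast (by positivity) (by omega)]
end

section
/- There exists an absolute constant C > 0 such that for all integers q ≥ 1, n ≥ 1 and all real p ≥ 2: n^{2q/p} · (2√(2q))^{2q} · √q · Γ(n/p) / (q! · Γ((n+2q)/p)) ≤ C · (32 e³)^q. -/
/-!
Log-convexity of `Γ` gives the Gautschi-type bound `x ^ a * Γ (x + 1) ≤ Γ (x + 1 + a)` for `x > 0`,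
`a ≥ 0`. With `x = n / p` and `a = 2q / p` this bounds `n ^ a * Γ x / Γ (x + a)` by
`p ^ (2q / p) * (1 + 2q / n) ≤ e ^ (2q) * (1 + 2q)`. Since `(2 √(2q)) ^ (2q) = 8 ^ q * q ^ q` and
`q ^ q ≤ e ^ q * q!`, what remains is the polynomial factor `√q * (1 + 2q)`, which is absorbed
into `4 ^ q`.
-/

open Real

namespace Real

lemma rpow_mul_Gamma_add_one_le_of_le_one {x a : ℝ} (hx : 0 < x) (ha₀ : 0 ≤ a) (ha₁ : a ≤ 1) :
    x ^ a * Gamma (x + 1) ≤ Gamma (x + 1 + a) := by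
  rcases ha₀.eq_or_lt with rfl | ha₀
  · simp
  rcases ha₁.eq_or_lt with rfl | ha₁
  · rw [rpow_one, Gamma_add_one (by positivity : x + 1 ≠ 0)]
    gcongr
    linarith
  have hxa : 0 < x + a := by positivity
  have hΓ : 0 < Gamma (x + a) := Gamma_pos_of_pos hxa
  have hrec : Gamma (x + 1 + a) = (x + a) * Gamma (x + a) := by
    rw [← Gamma_add_one hxa.ne']; ring_nf
  -- log-convexity of `Gamma` between `x + a` and `x + a + 1`, whose `a`-weighted mean is `x + 1`
  have hconv : Gamma (x + 1) ≤ (x + a) ^ (1 - a) * Gamma (x + a) := by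
    have h := Gamma_mul_add_mul_le_rpow_Gamma_mul_rpow_Gamma (s := x + a) (t := x + 1 + a) hxa
      (by positivity) ha₀ (sub_pos.2 ha₁) (add_sub_cancel a 1)
    rwa [show a * (x + a) + (1 - a) * (x + 1 + a) = x + 1 by ring, hrec,
      mul_rpow hxa.le hΓ.le, mul_left_comm, ← rpow_add hΓ, add_sub_cancel, rpow_one] at h
  calc x ^ a * Gamma (x + 1) ≤ (x + a) ^ a * ((x + a) ^ (1 - a) * Gamma (x + a)) := by
        gcongr; linarith
    _ = Gamma (x + 1 + a) := by
        rw [← mul_assoc, ← rpow_add hxa, add_sub_cancel, rpow_one, hrec]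

lemma rpow_mul_Gamma_add_one_le {x a : ℝ} (hx : 0 < x) (ha : 0 ≤ a) :
    x ^ a * Gamma (x + 1) ≤ Gamma (x + 1 + a) := by
  suffices ∀ k : ℕ, ∀ b : ℝ, 0 ≤ b → b ≤ k + 1 → x ^ b * Gamma (x + 1) ≤ Gamma (x + 1 + b) from
    this ⌊a⌋₊ a ha (Nat.lt_floor_add_one a).le
  intro k
  induction k with
  | zero => exact fun b hb₀ hb₁ ↦ rpow_mul_Gamma_add_one_le_of_le_one hx hb₀ (by simpa using hb₁)
  | succ k ih =>
    intro b hb₀ hb₁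
    rcases le_total b 1 with hb_le | hb_ge
    · exact rpow_mul_Gamma_add_one_le_of_le_one hx hb₀ hb_le
    have hpos : 0 < x + b := by positivity
    calc x ^ b * Gamma (x + 1) = x * (x ^ (b - 1) * Gamma (x + 1)) := by
          rw [rpow_sub_one hx.ne']; field_simp
      _ ≤ x * Gamma (x + 1 + (b - 1)) := by
          gcongr; exact ih _ (by linarith) (by push_cast at hb₁; linarith)
      _ ≤ (x + b) * Gamma (x + b) := by
          rw [show x + 1 + (b - 1) = x + b by ring]
          gcongr
          linarith
      _ = Gamma (x + 1 + b) := by rw [add_right_comm, Gamma_add_one hpos.ne']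

lemma rpow_mul_Gamma_le {x a : ℝ} (hx : 0 < x) (ha : 0 ≤ a) :
    x ^ a * Gamma x ≤ (1 + a / x) * Gamma (x + a) := by
  have h := rpow_mul_Gamma_add_one_le hx ha
  rw [Gamma_add_one hx.ne', add_right_comm, Gamma_add_one (by positivity : x + a ≠ 0)] at h
  rw [one_add_div hx.ne', div_mul_eq_mul_div, le_div_iff₀ hx]
  linarith

lemma rpow_div_self_le_exp {p c : ℝ} (hp : 0 < p) (hc : 0 ≤ c) : p ^ (c / p) ≤ exp c := by
  rw [rpow_def_of_pos hp, exp_le_exp, mul_div, div_le_iff₀ hp]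
  nlinarith [log_le_sub_one_of_pos hp]

lemma rpow_mul_Gamma_div_Gamma_le {n p c : ℝ} (hn : 1 ≤ n) (hp : 0 < p) (hc : 0 ≤ c) :
    n ^ (c / p) * Gamma (n / p) / Gamma ((n + c) / p) ≤ exp c * (1 + c) := by
  have hx : 0 < n / p := by positivity
  have hΓ : 0 < Gamma ((n + c) / p) := Gamma_pos_of_pos (by positivity)
  have hratio : (c / p) / (n / p) ≤ c := by
    rw [div_div_div_cancel_right₀ hp.ne']
    exact div_le_self hc hn
  have hsplit : n ^ (c / p) = p ^ (c / p) * (n / p) ^ (c / p) := by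
    rw [← mul_rpow hp.le hx.le, mul_div_cancel₀ _ hp.ne']
  rw [div_le_iff₀ hΓ, hsplit, add_div, mul_assoc, mul_assoc (exp c)]
  exact mul_le_mul (rpow_div_self_le_exp hp hc)
    ((rpow_mul_Gamma_le hx (by positivity)).trans (by gcongr)) (by positivity) (by positivity)

end Real

open Nat

lemma two_mul_sqrt_two_mul_pow_div_factorial_le (q : ℕ) :
    (2 * √(2 * q)) ^ (2 * q) / q ! ≤ (8 * exp 1) ^ q := by
  have hsq : (2 * √(2 * q)) ^ 2 = 8 * q := by
    rw [mul_pow, sq_sqrt (by positivity)]; ring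
  rw [pow_mul, hsq, mul_pow, mul_pow, ← exp_nat_mul, mul_one, mul_div_assoc]
  gcongr
  exact pow_div_factorial_le_exp _ (by positivity) q

lemma sqrt_mul_one_add_two_mul_le (q : ℕ) : √q * (1 + 2 * q) ≤ 3 * 4 ^ q := by
  have hq : (q : ℝ) ≤ 2 ^ q := by exact_mod_cast Nat.lt_two_pow_self.le
  have hsqrt : √q ≤ q :=
    (sqrt_le_left (by positivity)).2 (by exact_mod_cast Nat.le_self_pow two_ne_zero q)
  have h4 : (4 : ℝ) ^ q = 2 ^ q * 2 ^ q := by rw [← mul_pow]; norm_num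
  calc √q * (1 + 2 * q) ≤ q * (1 + 2 * q) := by gcongr
    _ ≤ 3 * 4 ^ q := by
        have h1 : (1 : ℝ) ≤ 2 ^ q := one_le_pow₀ one_le_two
        nlinarith [mul_le_mul hq hq (by positivity) (by positivity)]

theorem stmt_13 : ∃ C : ℝ, 0 < C ∧ ∀ q n : ℕ, 1 ≤ q → 1 ≤ n → ∀ p : ℝ, 2 ≤ p →
    (n : ℝ) ^ (2 * q / p) * (2 * Real.sqrt (2 * q)) ^ (2 * q) * Real.sqrt q *
        Real.Gamma (n / p) / ((Nat.factorial q) * Real.Gamma ((n + 2 * q) / p))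
      ≤ C * (32 * Real.exp 3) ^ q := by
  refine ⟨3, by norm_num, fun q n _ hn p hp ↦ ?_⟩
  have hΓ := rpow_mul_Gamma_div_Gamma_le (c := 2 * q) (by exact_mod_cast hn : (1 : ℝ) ≤ n)
    (by linarith : 0 < p) (by positivity)
  calc (n : ℝ) ^ (2 * q / p) * (2 * √(2 * q)) ^ (2 * q) * √q * Gamma (n / p)
        / (q ! * Gamma ((n + 2 * q) / p))
      = (n ^ (2 * q / p) * Gamma (n / p) / Gamma ((n + 2 * q) / p))
          * ((2 * √(2 * q)) ^ (2 * q) / q !) * √q := by ring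
    _ ≤ (exp (2 * q) * (1 + 2 * q)) * (8 * exp 1) ^ q * √q := by
        gcongr
        exact two_mul_sqrt_two_mul_pow_div_factorial_le q
    _ = (8 * exp 1 * exp 2) ^ q * (√q * (1 + 2 * q)) := by
        rw [mul_comm 2, exp_nat_mul]; ring
    _ ≤ (8 * exp 1 * exp 2) ^ q * (3 * 4 ^ q) := by
        gcongr ?_ * ?_; exact sqrt_mul_one_add_two_mul_le q
    _ = 3 * (32 * exp 3) ^ q := by
        rw [mul_assoc 8, ← exp_add, show (1 : ℝ) + 2 = 3 by norm_num,
          show (32 : ℝ) * exp 3 = 8 * exp 3 * 4 by ring, mul_pow (8 * exp 3)]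
        ring
end
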